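/- arXiv:funct-an/9607003 — 3 statements merged into one kernel-verified Lean document; each statement's English description precedes it below -/
import Mathlib

section
/- Let θ ∈ [0,1] be irrational, 𝔄_θ the universal C*-algebra generated by two unitaries U, V with VU = e^{2πiθ}UV (the irrational rotation algebra, which is simple), and β the action of the two-torus 𝕋² on 𝔄_θ determined by β_{(z₁,z₂)}(U) = z₁U and β_{(z₁,z₂)}(V) = z₂V. Then β_{(z₁,z₂)} is an inner automorphism of 𝔄_θ if and only if z₁ and z₂ both lie in the subgroup {e^{2πi(nθ+m)} : n,m ∈ ℤ} of 𝕋; moreover, any unitary W ∈ 𝔄_θ implementing β_{(z₁,z₂)} is of the form λU^nV^m with λ ∈ 𝕋 and n,m ∈ ℤ. -/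
/-- A simple C*-algebra: the only closed two-sided ideals are `⊥` and `⊤`. -/
def IsSimpleCStar (A : Type*) [CStarAlgebra A] : Prop :=
  ∀ I : TwoSidedIdeal A, IsClosed (I : Set A) → I = ⊥ ∨ I = ⊤

/-- A model of the irrational rotation algebra `𝔄_θ`: a C*-algebra generated by two unitaries
`U`, `V` with `VU = e^{2πiθ}UV`, universal for this relation (and simple, as is automatic for
irrational `θ`). -/
structure RotationAlgebraModel (θ : ℝ) (A : Type*) [CStarAlgebra A] where
  U : unitary A
  V : unitary A
  rel : (V : A) * (U : A) = Complex.exp (2 * Real.pi * Complex.I * θ) • ((U : A) * (V : A))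
  generated : (StarAlgebra.adjoin ℂ {(U : A), (V : A)}).topologicalClosure = ⊤
  universal : ∀ (B : Type) (_ : CStarAlgebra B) (u v : unitary B),
    (v : B) * (u : B) = Complex.exp (2 * Real.pi * Complex.I * θ) • ((u : B) * (v : B)) →
    ∃ Φ : A →⋆ₐ[ℂ] B, Φ U = u ∧ Φ V = v
  simple : IsSimpleCStar A

/-!
If `Ad W = β`, then `W U W* = z₁ U`. In the representation `U ↦ diag(e^{2πiθj})`, `V ↦ shift`
of `𝔄_θ` on `ℓ²(ℤ)`, the image of `W` carries the eigenvector `δ₀` of `diag` (eigenvalue `1`) to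
an eigenvector with eigenvalue `z₁⁻¹`, so `z₁ ∈ e^{2πiθℤ} = e^{2πi(θℤ+ℤ)}`; the representation
with the roles of `U` and `V` exchanged gives the same for `z₂`. Conversely, for
`z₁ = e^{2πiθn₁}` and `z₂ = e^{2πiθn₂}` the automorphisms `β` and `Ad (U^{-n₂} V^{n₁})` agree on
the generators, hence everywhere. Two unitaries implementing the same automorphism differ by a
central unitary, and the centre of a simple unital C*-algebra is `ℂ`: if `c` is central and
`μ ∈ σ(c)`, the closure of the ideal generated by `c - μ` is a proper closed ideal, hence zero.
-/

namespace StarAlgEquiv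

variable {K A : Type*} [Field K] [Ring A] [Algebra K A] [Star A]

lemma zpow_apply_of_apply_eq_smul {f : A ≃⋆ₐ[K] A} {x : A} {c : K} (hc : c ≠ 0)
    (h : f x = c • x) (n : ℤ) : (f ^ n) x = c ^ n • x := by
  have h_inv : f⁻¹ x = c⁻¹ • x := by
    rw [aut_inv, symm_apply_eq, map_smul, h, smul_smul, inv_mul_cancel₀ hc, one_smul]
  induction n using Int.induction_on with
  | zero => simp
  | succ n ih =>
    rw [zpow_add_one, mul_apply, h, map_smul, ih, smul_smul, zpow_add_one₀ hc, mul_comm]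
  | pred n ih =>
    rw [zpow_sub_one, mul_apply, h_inv, map_smul, ih, smul_smul, zpow_sub_one₀ hc, mul_comm]

end StarAlgEquiv

namespace Unitary

variable {S R : Type*} [Monoid S] [Ring R] [StarRing R] [MulAction S R] [IsScalarTower S R R]
  [SMulCommClass S R R]

lemma conjStarAlgAut_apply_eq_smul_iff (u : unitary R) {x : R} {c : S} :
    conjStarAlgAut S R u x = c • x ↔ (u : R) * x = c • (x * u) := by
  rw [conjStarAlgAut_apply]
  constructor
  · intro h
    rw [← smul_mul_assoc, ← h, mul_assoc, star_mul_self_of_mem u.prop, mul_one]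
  · intro h
    rw [h, smul_mul_assoc, mul_assoc, mul_star_self_of_mem u.prop, mul_one]

end Unitary

theorem StarAlgHom.ext_of_topologicalClosure_adjoin_eq_top {R A B F : Type*} [CommSemiring R]
    [StarRing R] [TopologicalSpace A] [Semiring A] [Algebra R A] [StarRing A] [StarModule R A]
    [IsTopologicalSemiring A] [ContinuousStar A]
    [TopologicalSpace B] [T2Space B] [Semiring B] [Algebra R B] [StarRing B]
    [FunLike F A B] [AlgHomClass F R A B] [StarHomClass F A B] {s : Set A}
    (hs : (StarAlgebra.adjoin R s).topologicalClosure = ⊤) {f g : F} (hf : Continuous f)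
    (hg : Continuous g) (h : s.EqOn f g) : f = g := by
  have hclosed : IsClosed (StarAlgHom.equalizer f g : Set A) := isClosed_eq hf hg
  have := StarSubalgebra.topologicalClosure_minimal (StarAlgHom.adjoin_le_equalizer f g h) hclosed
  rw [hs, top_le_iff] at this
  exact DFunLike.ext f g fun x => (this ▸ trivial : x ∈ StarAlgHom.equalizer f g)

instance Ideal.closure_isTwoSided {R : Type*} [Ring R] [TopologicalSpace R] [IsTopologicalRing R]
    (I : Ideal R) [I.IsTwoSided] : I.closure.IsTwoSided :=
  ⟨fun b hx => map_mem_closure (f := (· * b)) (continuous_mul_const b) hx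
    fun _ ha => I.mul_mem_right b ha⟩

lemma Ideal.span_singleton_isTwoSided_of_mem_center {R : Type*} [Ring R] {c : R}
    (hc : c ∈ Set.center R) : (Ideal.span {c}).IsTwoSided := by
  refine ⟨fun b hx => ?_⟩
  obtain ⟨a, rfl⟩ := Ideal.mem_span_singleton'.1 hx
  rw [mul_assoc, ((Set.mem_center_iff.1 hc).comm b).eq, ← mul_assoc]
  exact Ideal.mul_mem_left _ _ (Ideal.mem_span_singleton_self c)

namespace IsSimpleCStar

variable {A : Type*} [CStarAlgebra A]

lemma eq_zero_of_mem_center_of_not_isUnit (hA : IsSimpleCStar A) {c : A}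
    (hc : c ∈ Set.center A) (hcu : ¬ IsUnit c) : c = 0 := by
  have := Ideal.span_singleton_isTwoSided_of_mem_center hc
  set I := (Ideal.span {c}).closure
  have hI_ne_top : I ≠ ⊤ := by
    refine Ideal.closure_ne_top _ fun h => hcu ?_
    obtain ⟨a, ha⟩ := Ideal.mem_span_singleton'.1 ((Ideal.eq_top_iff_one _).1 h)
    exact ⟨⟨c, a, ((Set.mem_center_iff.1 hc).comm a).eq ▸ ha, ha⟩, rfl⟩
  have hI_closed : IsClosed (I.toTwoSided : Set A) := by
    rw [Ideal.coe_toTwoSided, Ideal.coe_closure]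
    exact isClosed_closure
  rcases hA I.toTwoSided hI_closed with h | h
  · have : c ∈ I.toTwoSided :=
      Ideal.mem_toTwoSided.2 (subset_closure (Ideal.mem_span_singleton_self c))
    rwa [h, TwoSidedIdeal.mem_bot] at this
  · refine absurd ((Ideal.eq_top_iff_one I).2 ?_) hI_ne_top
    exact Ideal.mem_toTwoSided.1 (h ▸ TwoSidedIdeal.mem_top A)

lemma isCentral (hA : IsSimpleCStar A) : Algebra.IsCentral ℂ A := by
  refine ⟨fun x hx => ?_⟩
  rcases subsingleton_or_nontrivial A with hA' | hA'
  · exact ⟨0, Subsingleton.elim _ _⟩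
  obtain ⟨μ, hμ⟩ := spectrum.nonempty x
  have hc : x - algebraMap ℂ A μ ∈ Set.center A :=
    (Subalgebra.center ℂ A).sub_mem hx (Subalgebra.algebraMap_mem _ μ)
  have hcu : ¬ IsUnit (x - algebraMap ℂ A μ) := fun h =>
    spectrum.mem_iff.1 hμ (by simpa using h.neg)
  exact ⟨μ, (sub_eq_zero.1 (hA.eq_zero_of_mem_center_of_not_isUnit hc hcu)).symm⟩

end IsSimpleCStar

open Complex
open scoped lp ENNReal Real

noncomputable section

namespace lp

variable {ι : Type*}

instance nontrivial [Nonempty ι] {E : Type*} [NormedAddCommGroup E] [Nontrivial E]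
    {p : ℝ≥0∞} : Nontrivial (lp (fun _ : ι => E) p) := by
  classical
  obtain ⟨x, hx⟩ := exists_ne (0 : E)
  obtain ⟨i⟩ := ‹Nonempty ι›
  exact ⟨⟨lp.single p i x, 0, fun h => hx (by simpa using congrArg (fun f : lp _ p => f i) h)⟩⟩

lemma memℓp_two_weightedComp (c : ι → ℂ) (hc : ∀ i, ‖c i‖ = 1) (e : ι ≃ ι) (ξ : ℓ²(ι, ℂ)) :
    Memℓp (fun i => c i * ξ (e i)) 2 := by
  have hp : 0 < (2 : ℝ≥0∞).toReal := by norm_num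
  refine (memℓp_gen_iff hp).2 ?_
  simpa [norm_mul, hc, Function.comp_def] using
    (e.summable_iff (f := fun i => ‖ξ i‖ ^ (2 : ℝ≥0∞).toReal)).2 ((lp.memℓp ξ).summable hp)

def weightedCompₗᵢ (c : ι → ℂ) (hc : ∀ i, ‖c i‖ = 1) (e : ι ≃ ι) :
    ℓ²(ι, ℂ) →ₗᵢ[ℂ] ℓ²(ι, ℂ) where
  toFun ξ := ⟨fun i => c i * ξ (e i), memℓp_two_weightedComp c hc e ξ⟩
  map_add' ξ η := by ext i; simp only [lp.coeFn_add, Pi.add_apply, mul_add]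
  map_smul' r ξ := by ext i; simp [mul_left_comm]
  norm_map' ξ := by
    have hp : 0 < (2 : ℝ≥0∞).toReal := by norm_num
    rw [lp.norm_eq_tsum_rpow hp, lp.norm_eq_tsum_rpow hp]
    congr 1
    simpa [norm_mul, hc] using e.tsum_eq (fun i => ‖ξ i‖ ^ (2 : ℝ≥0∞).toReal)

@[simp] lemma weightedCompₗᵢ_apply (c : ι → ℂ) (hc : ∀ i, ‖c i‖ = 1) (e : ι ≃ ι)
    (ξ : ℓ²(ι, ℂ)) (i : ι) : weightedCompₗᵢ c hc e ξ i = c i * ξ (e i) := rfl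

lemma weightedCompₗᵢ_surjective (c : ι → ℂ) (hc : ∀ i, ‖c i‖ = 1) (e : ι ≃ ι) :
    Function.Surjective (weightedCompₗᵢ c hc e) := by
  have hc' : ∀ i, ‖(starRingEnd ℂ) (c (e.symm i))‖ = 1 := by simp [hc]
  intro η
  refine ⟨weightedCompₗᵢ _ hc' e.symm η, ?_⟩
  ext i
  simp [← mul_assoc, Complex.mul_conj', hc]

def weightedComp (c : ι → ℂ) (hc : ∀ i, ‖c i‖ = 1) (e : ι ≃ ι) :
    unitary (ℓ²(ι, ℂ) →L[ℂ] ℓ²(ι, ℂ)) :=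
  Unitary.linearIsometryEquiv.symm
    (LinearIsometryEquiv.ofSurjective _ (weightedCompₗᵢ_surjective c hc e))

@[simp] lemma weightedComp_apply (c : ι → ℂ) (hc : ∀ i, ‖c i‖ = 1) (e : ι ≃ ι)
    (ξ : ℓ²(ι, ℂ)) (i : ι) :
    ((weightedComp c hc e : ℓ²(ι, ℂ) →L[ℂ] ℓ²(ι, ℂ)) ξ) i = c i * ξ (e i) := rfl

def diagonal (c : ι → ℂ) (hc : ∀ i, ‖c i‖ = 1) : unitary (ℓ²(ι, ℂ) →L[ℂ] ℓ²(ι, ℂ)) :=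
  weightedComp c hc (Equiv.refl ι)

lemma diagonal_single (c : ι → ℂ) (hc : ∀ i, ‖c i‖ = 1) [DecidableEq ι] (i₀ : ι) :
    (diagonal c hc : ℓ²(ι, ℂ) →L[ℂ] ℓ²(ι, ℂ)) (lp.single 2 i₀ 1) =
      c i₀ • lp.single 2 i₀ 1 := by
  ext i
  rcases eq_or_ne i i₀ with rfl | hi
  · simp [diagonal]
  · simp [diagonal, Pi.single_eq_of_ne hi]

lemma exists_mul_eq_of_mul_diagonal_eq_smul {c : ι → ℂ} {hc : ∀ i, ‖c i‖ = 1}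
    {w : ℓ²(ι, ℂ) →L[ℂ] ℓ²(ι, ℂ)} (hw : w ∈ unitary _) {z : ℂ}
    (h : w * diagonal c hc = z • ((diagonal c hc : ℓ²(ι, ℂ) →L[ℂ] ℓ²(ι, ℂ)) * w)) (i₀ : ι) :
    ∃ i, z * c i = c i₀ := by
  classical
  set ξ := w (lp.single 2 i₀ 1)
  have hξ : ξ ≠ 0 := by
    intro h0
    have h1 := congrArg (fun T : ℓ²(ι, ℂ) →L[ℂ] ℓ²(ι, ℂ) => T (lp.single 2 i₀ 1))
      (Unitary.star_mul_self_of_mem hw)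
    simp only [mul_apply_eq_comp, one_apply_eq_self] at h1
    have h2 := congrArg (fun η : ℓ²(ι, ℂ) => η i₀) h1
    simp [ξ, h0] at h2
  have heigen : c i₀ • ξ = z • (diagonal c hc : ℓ²(ι, ℂ) →L[ℂ] ℓ²(ι, ℂ)) ξ := by
    simpa [diagonal_single, ξ] using congrArg (fun T => T (lp.single 2 i₀ 1)) h
  obtain ⟨i, hi⟩ : ∃ i, ξ i ≠ 0 := by
    by_contra! h0
    exact hξ (lp.ext (funext h0))
  refine ⟨i, mul_right_cancel₀ hi ?_⟩
  have := congrArg (fun η : ℓ²(ι, ℂ) => η i) heigen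
  simp only [lp.coeFn_smul, Pi.smul_apply, smul_eq_mul, diagonal, weightedComp_apply,
    Equiv.refl_apply] at this
  rw [this]; ring

end lp

lemma norm_exp_two_pi_I_mul_zpow (θ : ℝ) (j : ℤ) : ‖Complex.exp (2 * π * I * θ) ^ j‖ = 1 := by
  rw [norm_zpow, Complex.norm_exp]
  simp

lemma exp_two_pi_I_mul_int_mul_add_int (θ : ℝ) (n m : ℤ) :
    Complex.exp (2 * π * I * (n * θ + m)) = Complex.exp (2 * π * I * θ) ^ n := by
  rw [show 2 * π * I * (n * θ + m) = n * (2 * π * I * θ) + m * (2 * π * I) by ring,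
    Complex.exp_add, Complex.exp_int_mul, Complex.exp_int_mul_two_pi_mul_I, mul_one]

def diagRotation (θ : ℝ) : unitary (ℓ²(ℤ, ℂ) →L[ℂ] ℓ²(ℤ, ℂ)) :=
  lp.diagonal (fun j => Complex.exp (2 * π * I * θ) ^ j) (norm_exp_two_pi_I_mul_zpow θ)

def bilateralShift (k : ℤ) : unitary (ℓ²(ℤ, ℂ) →L[ℂ] ℓ²(ℤ, ℂ)) :=
  lp.weightedComp 1 (fun _ => norm_one) (Equiv.addRight k)

lemma bilateralShift_one_mul_diagRotation (θ : ℝ) :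
    (bilateralShift 1 : ℓ²(ℤ, ℂ) →L[ℂ] ℓ²(ℤ, ℂ)) * diagRotation θ =
      Complex.exp (2 * π * I * θ) • ((diagRotation θ : ℓ²(ℤ, ℂ) →L[ℂ] ℓ²(ℤ, ℂ)) *
        bilateralShift 1) := by
  ext ξ j
  simp [bilateralShift, diagRotation, lp.diagonal, zpow_add_one₀ (Complex.exp_ne_zero _)]
  ring

lemma diagRotation_mul_bilateralShift_neg_one (θ : ℝ) :
    (diagRotation θ : ℓ²(ℤ, ℂ) →L[ℂ] ℓ²(ℤ, ℂ)) * bilateralShift (-1) =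
      Complex.exp (2 * π * I * θ) • ((bilateralShift (-1) : ℓ²(ℤ, ℂ) →L[ℂ] ℓ²(ℤ, ℂ)) *
        diagRotation θ) := by
  ext ξ j
  simp [bilateralShift, diagRotation, lp.diagonal, ← sub_eq_add_neg,
    zpow_sub_one₀ (Complex.exp_ne_zero _)]
  field_simp

lemma exists_eq_zpow_of_conjStarAlgAut_apply_eq_smul {θ : ℝ} {A : Type*} [Ring A]
    [StarRing A] [Algebra ℂ A] (Φ : A →⋆ₐ[ℂ] (ℓ²(ℤ, ℂ) →L[ℂ] ℓ²(ℤ, ℂ))) {u : A}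
    (hu : Φ u = diagRotation θ) (W : unitary A) {z : ℂ}
    (h : Unitary.conjStarAlgAut ℂ A W u = z • u) :
    ∃ n : ℤ, z = Complex.exp (2 * π * I * θ) ^ n := by
  rw [Unitary.conjStarAlgAut_apply_eq_smul_iff] at h
  have hΦ : Φ W * (diagRotation θ : ℓ²(ℤ, ℂ) →L[ℂ] ℓ²(ℤ, ℂ)) =
      z • ((diagRotation θ : ℓ²(ℤ, ℂ) →L[ℂ] ℓ²(ℤ, ℂ)) * Φ W) := by
    rw [← hu, ← map_mul, h, map_smul, map_mul]
  obtain ⟨j, hj⟩ :=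
    lp.exists_mul_eq_of_mul_diagonal_eq_smul (Unitary.map_mem Φ W.prop) hΦ 0
  rw [zpow_zero] at hj
  exact ⟨-j, by rw [zpow_neg]; exact eq_inv_of_mul_eq_one_left hj⟩

namespace RotationAlgebraModel

variable {θ : ℝ} {A : Type*} [CStarAlgebra A] (M : RotationAlgebraModel θ A)

lemma nontrivial (M : RotationAlgebraModel θ A) : Nontrivial A := by
  obtain ⟨Φ, -, -⟩ := M.universal _ inferInstance (diagRotation θ) (bilateralShift 1)
    (bilateralShift_one_mul_diagRotation θ)
  exact (Φ : A →+* (ℓ²(ℤ, ℂ) →L[ℂ] ℓ²(ℤ, ℂ))).domain_nontrivial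

lemma starAlgEquiv_ext {f g : A ≃⋆ₐ[ℂ] A} (hU : f M.U = g M.U) (hV : f M.V = g M.V) :
    f = g :=
  StarAlgHom.ext_of_topologicalClosure_adjoin_eq_top M.generated
    (StarAlgEquiv.isometry f).continuous (StarAlgEquiv.isometry g).continuous
    (by rintro _ (rfl | rfl) <;> assumption)

lemma conjStarAlgAut_zpow_mul_zpow_apply_U (m n : ℤ) :
    Unitary.conjStarAlgAut ℂ A (M.U ^ m * M.V ^ n) M.U =
      Complex.exp (2 * π * I * θ) ^ n • (M.U : A) := by
  have hγ := Complex.exp_ne_zero (2 * π * I * θ)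
  have hUU : Unitary.conjStarAlgAut ℂ A M.U M.U = (1 : ℂ) • (M.U : A) := by
    rw [Unitary.conjStarAlgAut_apply_eq_smul_iff, one_smul]
  have hVU : Unitary.conjStarAlgAut ℂ A M.V M.U = Complex.exp (2 * π * I * θ) • (M.U : A) :=
    (Unitary.conjStarAlgAut_apply_eq_smul_iff _).2 M.rel
  rw [map_mul, map_zpow, map_zpow, StarAlgEquiv.mul_apply,
    StarAlgEquiv.zpow_apply_of_apply_eq_smul hγ hVU, map_smul,
    StarAlgEquiv.zpow_apply_of_apply_eq_smul one_ne_zero hUU, one_zpow, one_smul]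

lemma conjStarAlgAut_zpow_mul_zpow_apply_V (m n : ℤ) :
    Unitary.conjStarAlgAut ℂ A (M.U ^ m * M.V ^ n) M.V =
      Complex.exp (2 * π * I * θ) ^ (-m) • (M.V : A) := by
  have hγ := Complex.exp_ne_zero (2 * π * I * θ)
  have hVV : Unitary.conjStarAlgAut ℂ A M.V M.V = (1 : ℂ) • (M.V : A) := by
    rw [Unitary.conjStarAlgAut_apply_eq_smul_iff, one_smul]
  have hUV :
      Unitary.conjStarAlgAut ℂ A M.U M.V = (Complex.exp (2 * π * I * θ))⁻¹ • (M.V : A) := by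
    rw [Unitary.conjStarAlgAut_apply_eq_smul_iff, M.rel, smul_smul, inv_mul_cancel₀ hγ,
      one_smul]
  rw [map_mul, map_zpow, map_zpow, StarAlgEquiv.mul_apply,
    StarAlgEquiv.zpow_apply_of_apply_eq_smul one_ne_zero hVV, one_zpow, one_smul,
    StarAlgEquiv.zpow_apply_of_apply_eq_smul (inv_ne_zero hγ) hUV, inv_zpow', zpow_neg]

lemma eq_conjStarAlgAut_of_apply_eq_zpow_smul (β : A ≃⋆ₐ[ℂ] A) {n₁ n₂ : ℤ}
    (hβU : β M.U = Complex.exp (2 * π * I * θ) ^ n₁ • (M.U : A))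
    (hβV : β M.V = Complex.exp (2 * π * I * θ) ^ n₂ • (M.V : A)) :
    β = Unitary.conjStarAlgAut ℂ A (M.U ^ (-n₂) * M.V ^ n₁) :=
  M.starAlgEquiv_ext (by rw [hβU, conjStarAlgAut_zpow_mul_zpow_apply_U])
    (by rw [hβV, conjStarAlgAut_zpow_mul_zpow_apply_V, neg_neg])

lemma exists_eq_zpow_of_conjStarAlgAut_apply_U (W : unitary A) {z : ℂ}
    (h : Unitary.conjStarAlgAut ℂ A W M.U = z • (M.U : A)) :
    ∃ n : ℤ, z = Complex.exp (2 * π * I * θ) ^ n := by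
  obtain ⟨Φ, hΦ, -⟩ := M.universal _ inferInstance (diagRotation θ) (bilateralShift 1)
    (bilateralShift_one_mul_diagRotation θ)
  exact exists_eq_zpow_of_conjStarAlgAut_apply_eq_smul Φ hΦ W h

lemma exists_eq_zpow_of_conjStarAlgAut_apply_V (W : unitary A) {z : ℂ}
    (h : Unitary.conjStarAlgAut ℂ A W M.V = z • (M.V : A)) :
    ∃ n : ℤ, z = Complex.exp (2 * π * I * θ) ^ n := by
  obtain ⟨Φ, -, hΦ⟩ := M.universal _ inferInstance (bilateralShift (-1)) (diagRotation θ)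
    (diagRotation_mul_bilateralShift_neg_one θ)
  exact exists_eq_zpow_of_conjStarAlgAut_apply_eq_smul Φ hΦ W h

end RotationAlgebraModel

end

theorem rotation_algebra_gauge_action_inner_iff_general
    {θ : ℝ}
    {A : Type*} [CStarAlgebra A] (M : RotationAlgebraModel θ A)
    (z₁ z₂ : ℂ)
    (β : A ≃⋆ₐ[ℂ] A)
    (hβU : β (M.U : A) = z₁ • (M.U : A)) (hβV : β (M.V : A) = z₂ • (M.V : A)) :
    ((∃ W : unitary A, ∀ x : A, β x = (W : A) * x * star (W : A)) ↔
      ((∃ n m : ℤ, z₁ = Complex.exp (2 * Real.pi * Complex.I * (n * θ + m))) ∧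
       (∃ n m : ℤ, z₂ = Complex.exp (2 * Real.pi * Complex.I * (n * θ + m))))) ∧
    (∀ W : unitary A, (∀ x : A, β x = (W : A) * x * star (W : A)) →
      ∃ (lam : ℂ) (n m : ℤ), ‖lam‖ = 1 ∧
        (W : A) = lam • ((M.U ^ n * M.V ^ m : unitary A) : A)) := by
  have hconj (W : unitary A) :
      (∀ x : A, β x = (W : A) * x * star (W : A)) ↔ β = Unitary.conjStarAlgAut ℂ A W :=
    ⟨fun h => StarAlgEquiv.ext (f := β) (g := Unitary.conjStarAlgAut ℂ A W) h,
      fun h x => by rw [h]; rfl⟩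
  simp only [hconj, exp_two_pi_I_mul_int_mul_add_int, exists_const]
  have forward (W : unitary A) (hW : β = Unitary.conjStarAlgAut ℂ A W) :
      (∃ n : ℤ, z₁ = Complex.exp (2 * π * I * θ) ^ n) ∧
        ∃ n : ℤ, z₂ = Complex.exp (2 * π * I * θ) ^ n :=
    ⟨M.exists_eq_zpow_of_conjStarAlgAut_apply_U W (hW ▸ hβU),
      M.exists_eq_zpow_of_conjStarAlgAut_apply_V W (hW ▸ hβV)⟩
  refine ⟨⟨fun ⟨W, hW⟩ => forward W hW, ?_⟩, fun W hW => ?_⟩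
  · rintro ⟨⟨n₁, h₁⟩, n₂, h₂⟩
    exact ⟨_, M.eq_conjStarAlgAut_of_apply_eq_zpow_smul β (h₁ ▸ hβU) (h₂ ▸ hβV)⟩
  · obtain ⟨⟨n₁, h₁⟩, n₂, h₂⟩ := forward W hW
    have := M.nontrivial
    have := M.simple.isCentral
    obtain ⟨α, hα⟩ := (Unitary.conjStarAlgAut_ext_iff' W _).1
      (hW.symm.trans (M.eq_conjStarAlgAut_of_apply_eq_zpow_smul β (h₁ ▸ hβU) (h₂ ▸ hβV)))
    exact ⟨α, -n₂, n₁, CStarRing.norm_coe_unitary α, congrArg Subtype.val hα⟩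

/-- **Inner automorphisms of the irrational rotation algebra among the gauge action**:
`β_{(z₁,z₂)}` is inner iff `z₁, z₂ ∈ e^{2πi(θℤ+ℤ)}`, and any implementing unitary is
`λ UⁿVᵐ`. -/
theorem rotation_algebra_gauge_action_inner_iff
    {θ : ℝ} (hθ : Irrational θ) (hθ0 : 0 ≤ θ) (hθ1 : θ ≤ 1)
    {A : Type*} [CStarAlgebra A] (M : RotationAlgebraModel θ A)
    (z₁ z₂ : ℂ) (hz₁ : ‖z₁‖ = 1) (hz₂ : ‖z₂‖ = 1)
    (β : A ≃⋆ₐ[ℂ] A)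
    (hβU : β (M.U : A) = z₁ • (M.U : A)) (hβV : β (M.V : A) = z₂ • (M.V : A)) :
    ((∃ W : unitary A, ∀ x : A, β x = (W : A) * x * star (W : A)) ↔
      ((∃ n m : ℤ, z₁ = Complex.exp (2 * Real.pi * Complex.I * (n * θ + m))) ∧
       (∃ n m : ℤ, z₂ = Complex.exp (2 * Real.pi * Complex.I * (n * θ + m))))) ∧
    (∀ W : unitary A, (∀ x : A, β x = (W : A) * x * star (W : A)) →
      ∃ (lam : ℂ) (n m : ℤ), ‖lam‖ = 1 ∧
        (W : A) = lam • ((M.U ^ n * M.V ^ m : unitary A) : A)) :=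
  rotation_algebra_gauge_action_inner_iff_general M z₁ z₂ β hβU hβV
end

section
/- Let 𝔄 be a unital C*-algebra, α a *-automorphism of 𝔄, q a positive integer, U ∈ 𝔄 a unitary with α^q = Ad U, and suppose α(U) = γU for some γ ∈ 𝕋 with γ ≠ 1. Then there is no irreducible representation π of 𝔄 on a Hilbert space H together with a unitary V on H satisfying V π(x) V* = π(α(x)) for all x ∈ 𝔄; in particular 𝔄 admits no α-invariant pure state. -/
open scoped ComplexOrder

/-- A state on a C*-algebra: a positive linear functional of norm one. -/
def IsState {A : Type*} [CStarAlgebra A] (φ : A →L[ℂ] ℂ) : Prop :=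
  (∀ x : A, 0 ≤ φ (star x * x)) ∧ ‖φ‖ = 1

/-- A pure state: an extreme point of the state space. -/
def IsPureState {A : Type*} [CStarAlgebra A] (φ : A →L[ℂ] ℂ) : Prop :=
  IsState φ ∧ ∀ (ψ₁ ψ₂ : A →L[ℂ] ℂ) (t : ℝ), IsState ψ₁ → IsState ψ₂ →
    0 < t → t < 1 → φ = t • ψ₁ + (1 - t) • ψ₂ → ψ₁ = φ ∧ ψ₂ = φ

/-- The `n`-th power of an automorphism, `n : ℕ`. -/
noncomputable def autNPow {A : Type*} [CStarAlgebra A] (α : A ≃⋆ₐ[ℂ] A) : ℕ → A ≃⋆ₐ[ℂ] A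
  | 0 => StarAlgEquiv.refl ℂ A
  | n + 1 => (autNPow α n).trans α

/-- A bundled complex Hilbert space. -/
structure HilbertC where
  carrier : Type
  [nacg : NormedAddCommGroup carrier]
  [ips : InnerProductSpace ℂ carrier]
  [cs : CompleteSpace carrier]

attribute [instance] HilbertC.nacg HilbertC.ips HilbertC.cs

/-!
If `(π, V)` were a covariant irreducible pair, `T = π(U)⋆ V^q` would commute with `π(𝔄)` because
`α^q = Ad U`, hence be a scalar `c`, nonzero as `T` is unitary; but `V T V⋆ = γ̄ T` gives `c = γ̄ c`.

If `φ` were an `α`-invariant pure state, invariance under `α^q = Ad U` would put `U` in the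
centralizer `{v | φ(v y) = φ(y v)}` of `φ`. Purity forces every unitary `u` of the centralizer to
act multiplicatively, `φ(u x) = φ(u) φ(x)` (compare `φ` with the positive functionals
`φ(¼ (1 ± u)(1 ± u)⋆ ·)`), so `φ(U) φ(U⋆) = 1`; but `φ(U) = φ(α U) = γ φ(U)` gives `φ(U) = 0`.
-/

namespace PositiveLinearMap

variable {A : Type*} [CStarAlgebra A] [PartialOrder A] [StarOrderedRing A]

theorem norm_apply_sq_le (f : A →ₚ[ℂ] ℂ) (x : A) : ‖f x‖ ^ 2 ≤ ‖f 1‖ * ‖f (star x * x)‖ := by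
  have hcs := norm_inner_le_norm (𝕜 := ℂ) (f.toPreGNS 1) (f.toPreGNS x)
  have h1 := f.preGNS_norm_sq (f.toPreGNS 1)
  have h2 := f.preGNS_norm_sq (f.toPreGNS x)
  simp only [preGNS_inner_def, ofPreGNS_toPreGNS, star_one, one_mul] at hcs h1 h2
  rw [← h1, ← h2, norm_pow, norm_pow, Complex.norm_real, Complex.norm_real, Real.norm_eq_abs,
    Real.norm_eq_abs, abs_norm, abs_norm, ← mul_pow]
  exact pow_le_pow_left₀ (norm_nonneg _) hcs 2

theorem norm_apply_le (f : A →ₚ[ℂ] ℂ) (x : A) : ‖f x‖ ≤ ‖f 1‖ * ‖x‖ := by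
  have hx : ‖f (star x * x)‖ ≤ ‖f 1‖ * ‖x‖ ^ 2 := by
    simpa [CStarRing.norm_star_mul_self, sq] using
      f.norm_apply_le_of_nonneg _ (star_mul_self_nonneg x)
  refine (sq_le_sq₀ (norm_nonneg _) (by positivity)).mp ?_
  calc ‖f x‖ ^ 2 ≤ ‖f 1‖ * ‖f (star x * x)‖ := f.norm_apply_sq_le x
    _ ≤ ‖f 1‖ * (‖f 1‖ * ‖x‖ ^ 2) := by gcongr
    _ = (‖f 1‖ * ‖x‖) ^ 2 := by ring

end PositiveLinearMap

namespace ContinuousLinearMap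

variable {A : Type*} [CStarAlgebra A]

theorem opNorm_eq_norm_apply_one (f : A →L[ℂ] ℂ) (hf : ∀ x, 0 ≤ f (star x * x)) :
    ‖f‖ = ‖f 1‖ := by
  -- for the spectral order the nonnegative elements are the `x⋆x`, so `f` is a positive map
  let _ := CStarAlgebra.spectralOrder A
  let _ := CStarAlgebra.spectralOrderedRing A
  let g : A →ₚ[ℂ] ℂ := .mk₀ f.toLinearMap fun a ha => by
    obtain ⟨b, rfl⟩ := CStarAlgebra.nonneg_iff_eq_star_mul_self.mp ha
    exact hf b
  refine le_antisymm (f.opNorm_le_bound (norm_nonneg _) g.norm_apply_le) ?_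
  rcases subsingleton_or_nontrivial A with hA | hA
  · simp [Subsingleton.elim (1 : A) 0]
  · simpa using f.le_opNorm 1

theorem eq_zero_of_apply_one_eq_zero (f : A →L[ℂ] ℂ) (hf : ∀ x, 0 ≤ f (star x * x))
    (h1 : f 1 = 0) : f = 0 :=
  norm_eq_zero.mp (by rw [f.opNorm_eq_norm_apply_one hf, h1, norm_zero])

def centralizer (φ : A →L[ℂ] ℂ) : Submodule ℂ A where
  carrier := {v | ∀ y, φ (v * y) = φ (y * v)}
  add_mem' {v w} hv hw y := by simp only [add_mul, mul_add, map_add, hv y, hw y]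
  zero_mem' y := by simp
  smul_mem' c v hv y := by simp only [smul_mul_assoc, mul_smul_comm, map_smul, hv y]

variable {φ : A →L[ℂ] ℂ}

theorem one_mem_centralizer : (1 : A) ∈ φ.centralizer := fun y => by rw [one_mul, mul_one]

theorem unitary_mem_centralizer_of_apply_conj {u : A} (hu : u ∈ unitary A)
    (h : ∀ x, φ (u * x * star u) = φ x) : u ∈ φ.centralizer := fun y => by
  rw [← h (y * u), mul_assoc, mul_assoc, Unitary.mul_star_self_of_mem hu, mul_one]

theorem nonneg_apply_mul_star_mul_of_mem_centralizer (hφ : ∀ x, 0 ≤ φ (star x * x)) {v : A}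
    (hv : v ∈ φ.centralizer) (x : A) : 0 ≤ φ (v * star v * (star x * x)) := by
  have h : star (x * v) * (x * v) = star v * (star x * x) * v := by simp only [star_mul, mul_assoc]
  rw [mul_assoc, hv, ← h]
  exact hφ (x * v)

end ContinuousLinearMap

section States

variable {A : Type*} [CStarAlgebra A] {φ : A →L[ℂ] ℂ}

theorem IsState.apply_one (hφ : IsState φ) : φ 1 = 1 := by
  have h1 : 0 ≤ φ 1 := by simpa using hφ.1 1
  rw [Complex.eq_coe_norm_of_nonneg h1, ← φ.opNorm_eq_norm_apply_one hφ.1, hφ.2,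
    Complex.ofReal_one]

theorem isState_of_apply_one (hφ : ∀ x, 0 ≤ φ (star x * x)) (h1 : φ 1 = 1) : IsState φ :=
  ⟨hφ, by rw [φ.opNorm_eq_norm_apply_one hφ, h1, norm_one]⟩

theorem IsPureState.eq_smul_of_le (hφ : IsPureState φ) {ψ : A →L[ℂ] ℂ}
    (hψ : ∀ x, 0 ≤ ψ (star x * x)) (hle : ∀ x, ψ (star x * x) ≤ φ (star x * x)) :
    ψ = ψ 1 • φ := by
  have hχ : ∀ x, 0 ≤ (φ - ψ) (star x * x) := fun x => by simpa using hle x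
  have hφ1 := hφ.1.apply_one
  obtain ⟨t, ht⟩ : ∃ t : ℝ, ψ 1 = t := ⟨_, Complex.eq_coe_norm_of_nonneg (by simpa using hψ 1)⟩
  have ht0 : 0 ≤ t := by simpa [ht] using hψ 1
  have ht1 : t ≤ 1 := by exact_mod_cast (by simpa [ht, hφ1] using hle 1 : (t : ℂ) ≤ 1)
  rw [ht]
  rcases ht0.eq_or_lt with rfl | ht0
  · rw [Complex.ofReal_zero, zero_smul ℂ φ]
    exact ψ.eq_zero_of_apply_one_eq_zero hψ (by simpa using ht)
  rcases ht1.eq_or_lt with rfl | ht1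
  · simpa [sub_eq_zero, eq_comm] using (φ - ψ).eq_zero_of_apply_one_eq_zero hχ (by simp [ht, hφ1])
  have ht1' : (1 - t : ℂ) ≠ 0 := by exact_mod_cast sub_ne_zero.mpr ht1.ne'
  set ψ₁ := (t⁻¹ : ℝ) • ψ
  set ψ₂ := ((1 - t)⁻¹ : ℝ) • (φ - ψ)
  have hs₁ : IsState ψ₁ := by
    refine isState_of_apply_one (fun x => ?_) (by simp [ψ₁, ht, Complex.real_smul, ht0.ne'])
    rw [smul_apply, Complex.real_smul]
    exact mul_nonneg (Complex.zero_le_real.mpr (inv_pos.mpr ht0).le) (hψ x)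
  have hs₂ : IsState ψ₂ := by
    refine isState_of_apply_one (fun x => ?_) (by simp [ψ₂, ht, hφ1, Complex.real_smul, ht1'])
    rw [smul_apply, Complex.real_smul]
    exact mul_nonneg (Complex.zero_le_real.mpr (inv_pos.mpr (sub_pos.mpr ht1)).le) (hχ x)
  have hsplit : φ = t • ψ₁ + (1 - t) • ψ₂ := by
    simp only [ψ₁, ψ₂, smul_smul, mul_inv_cancel₀ ht0.ne',
      mul_inv_cancel₀ (sub_ne_zero.mpr ht1.ne'), one_smul]
    abel
  rw [← (hφ.2 ψ₁ ψ₂ t hs₁ hs₂ ht0 ht1 hsplit).1]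
  ext x
  simp [ψ₁, Complex.real_smul, ht0.ne']

theorem IsPureState.apply_mul_eq_of_mem_centralizer (hφ : IsPureState φ) {v w : A}
    (hv : v ∈ φ.centralizer) (hw : w ∈ φ.centralizer) (hvw : v * star v + w * star w = 1)
    (x : A) : φ (v * star v * x) = φ (v * star v) * φ x := by
  have hsplit : ∀ y, φ y = φ (v * star v * y) + φ (w * star w * y) := fun y => by
    rw [← map_add, ← add_mul, hvw, one_mul]
  have h := hφ.eq_smul_of_le (ψ := φ ∘L ContinuousLinearMap.mul ℂ A (v * star v))
    (φ.nonneg_apply_mul_star_mul_of_mem_centralizer hφ.1.1 hv)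
    (fun y => by
      rw [hsplit (star y * y), ContinuousLinearMap.comp_apply, ContinuousLinearMap.mul_apply',
        le_add_iff_nonneg_right]
      exact φ.nonneg_apply_mul_star_mul_of_mem_centralizer hφ.1.1 hw y)
  simpa using congrArg (· x) h

theorem IsPureState.apply_add_star_mul (hφ : IsPureState φ) {u : A} (hu : u ∈ unitary A)
    (huc : u ∈ φ.centralizer) (x : A) : φ ((u + star u) * x) = φ (u + star u) * φ x := by
  set v := (2⁻¹ : ℂ) • (1 + u)
  set w := (2⁻¹ : ℂ) • (1 - u)
  have hv : v * star v = (2⁻¹ : ℂ) • 1 + (4⁻¹ : ℂ) • (u + star u) := by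
    simp only [v, star_smul, star_inv₀, star_ofNat, star_add, star_one, smul_add, mul_add,
      add_mul, mul_smul_comm, smul_mul_assoc, mul_one, one_mul, Unitary.mul_star_self_of_mem hu]
    module
  have hw : w * star w = (2⁻¹ : ℂ) • 1 - (4⁻¹ : ℂ) • (u + star u) := by
    simp only [w, star_smul, star_inv₀, star_ofNat, star_sub, star_one, smul_add, mul_sub,
      sub_mul, mul_smul_comm, smul_mul_assoc, mul_one, one_mul, Unitary.mul_star_self_of_mem hu]
    module
  have h := hφ.apply_mul_eq_of_mem_centralizer (v := v) (w := w)
    (φ.centralizer.smul_mem _ (add_mem φ.one_mem_centralizer huc))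
    (φ.centralizer.smul_mem _ (sub_mem φ.one_mem_centralizer huc))
    (by rw [hv, hw]; module) x
  rw [hv, add_mul, smul_mul_assoc, smul_mul_assoc, one_mul, map_add, map_smul, map_smul,
    map_add, map_smul, map_smul, hφ.1.apply_one] at h
  simp only [smul_eq_mul] at h
  linear_combination 4 * h

theorem IsPureState.apply_mul_of_mem_centralizer (hφ : IsPureState φ) {u : A}
    (hu : u ∈ unitary A) (huc : u ∈ φ.centralizer) (x : A) : φ (u * x) = φ u * φ x := by
  have hI : Complex.I • u ∈ unitary A :=
    Unitary.smul_mem_of_mem (by simp [Unitary.mem_iff, Complex.conj_I]) hu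
  have h₁ := hφ.apply_add_star_mul hu huc x
  have h₂ := hφ.apply_add_star_mul hI (φ.centralizer.smul_mem _ huc) x
  simp only [star_smul, Complex.star_def, Complex.conj_I, add_mul, smul_mul_assoc, map_add,
    map_smul, smul_eq_mul] at h₁ h₂
  linear_combination (h₁ - Complex.I * h₂) / 2 +
    (φ (u * x) - φ u * φ x + φ x * φ (star u) - φ (star u * x)) / 2 * Complex.I_sq

theorem IsPureState.apply_ne_zero_of_mem_centralizer (hφ : IsPureState φ) {u : A}
    (hu : u ∈ unitary A) (huc : u ∈ φ.centralizer) : φ u ≠ 0 := by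
  intro h0
  have h := hφ.apply_mul_of_mem_centralizer hu huc (star u)
  rw [Unitary.mul_star_self_of_mem hu, hφ.1.apply_one, h0, zero_mul] at h
  exact one_ne_zero h

end States

section Covariance

variable {A B : Type*} [CStarAlgebra A] [Ring B] [StarRing B] [Algebra ℂ B]
  {α : A ≃⋆ₐ[ℂ] A}

theorem autNPow_succ_apply (n : ℕ) (x : A) : autNPow α (n + 1) x = α (autNPow α n x) := rfl

theorem apply_autNPow_of_invariant {φ : A →L[ℂ] ℂ} (hφ : ∀ x, φ (α x) = φ x) (n : ℕ) (x : A) :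
    φ (autNPow α n x) = φ x := by
  induction n with
  | zero => rfl
  | succ n ih => rw [autNPow_succ_apply, hφ, ih]

variable {π : A →⋆ₐ[ℂ] B} {V : B}

theorem pow_mul_eq_autNPow_mul (hV : V ∈ unitary B) (hcov : ∀ x, V * π x * star V = π (α x))
    (n : ℕ) (x : A) : V ^ n * π x = π (autNPow α n x) * V ^ n := by
  have hmove : ∀ y, V * π y = π (α y) * V := fun y => by
    rw [← hcov, mul_assoc _ (star V), Unitary.star_mul_self_of_mem hV, mul_one]
  induction n with
  | zero => simp [autNPow]
  | succ n ih => rw [pow_succ', mul_assoc, ih, ← mul_assoc, hmove, mul_assoc, autNPow_succ_apply]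

variable {q : ℕ} {U : unitary A}

theorem commute_star_mul_pow (hV : V ∈ unitary B) (hcov : ∀ x, V * π x * star V = π (α x))
    (hAd : ∀ x : A, autNPow α q x = (U : A) * x * star (U : A)) (x : A) :
    π (star (U : A)) * V ^ q * π x = π x * (π (star (U : A)) * V ^ q) := by
  rw [mul_assoc, pow_mul_eq_autNPow_mul hV hcov, hAd, ← mul_assoc, ← map_mul, ← mul_assoc,
    ← mul_assoc, Unitary.star_mul_self_of_mem U.prop, one_mul, map_mul, mul_assoc]

theorem mul_star_mul_pow {γ : ℂ} (hV : V ∈ unitary B) (hcov : ∀ x, V * π x * star V = π (α x))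
    (hαU : α (U : A) = γ • (U : A)) :
    V * (π (star (U : A)) * V ^ q) = starRingEnd ℂ γ • (π (star (U : A)) * V ^ q) * V := by
  have hmove : V * π (star (U : A)) = π (α (star (U : A))) * V := by
    rw [← hcov, mul_assoc _ (star V), Unitary.star_mul_self_of_mem hV, mul_one]
  rw [← mul_assoc, hmove, map_star, hαU, star_smul, map_smul, map_star, Complex.star_def,
    mul_assoc, ← pow_succ', pow_succ, ← mul_assoc, smul_mul_assoc, smul_mul_assoc]

theorem not_covariant_of_commutant_eq_scalars [Nontrivial B] {γ : ℂ} (hγ : γ ≠ 1)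
    (hAd : ∀ x : A, autNPow α q x = (U : A) * x * star (U : A)) (hαU : α (U : A) = γ • (U : A))
    (hV : V ∈ unitary B) (hirr : ∀ T : B, (∀ x, T * π x = π x * T) → ∃ c : ℂ, T = c • 1) :
    ¬∀ x, V * π x * star V = π (α x) := by
  intro hcov
  set T := π (star (U : A)) * V ^ q
  have hT : T ∈ unitary B :=
    mul_mem (Unitary.map_mem π (Unitary.star_mem U.prop)) (pow_mem hV q)
  obtain ⟨c, hc⟩ := hirr T (commute_star_mul_pow hV hcov hAd)
  have hscalar : algebraMap ℂ B c = algebraMap ℂ B (starRingEnd ℂ γ * c) := by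
    have h := congrArg (· * star V) (mul_star_mul_pow (q := q) hV hcov hαU)
    simp only [T, hc, mul_smul_comm, smul_mul_assoc, mul_one, one_mul, smul_smul,
      Unitary.mul_star_self_of_mem hV] at h
    simpa [Algebra.algebraMap_eq_smul_one] using h
  have hγ' : starRingEnd ℂ γ ≠ 1 := fun h => hγ (by simpa using congrArg (starRingEnd ℂ) h)
  have hc0 : c = 0 := by
    have hfix : (1 - starRingEnd ℂ γ) * c = 0 := by
      linear_combination (algebraMap ℂ B).injective hscalar
    exact (mul_eq_zero.mp hfix).resolve_left (sub_ne_zero.mpr hγ'.symm)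
  have h := Unitary.star_mul_self_of_mem hT
  rw [hc, hc0, zero_smul, star_zero, zero_mul] at h
  exact zero_ne_one h

end Covariance

theorem not_exists_isPureState_invariant {A : Type*} [CStarAlgebra A] {α : A ≃⋆ₐ[ℂ] A} {q : ℕ}
    {U : unitary A} (hAd : ∀ x : A, autNPow α q x = (U : A) * x * star (U : A)) {γ : ℂ}
    (hγ : γ ≠ 1) (hαU : α (U : A) = γ • (U : A)) :
    ¬∃ φ : A →L[ℂ] ℂ, IsPureState φ ∧ ∀ x, φ (α x) = φ x := by
  rintro ⟨φ, hφ, hinv⟩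
  have hcentral : (U : A) ∈ φ.centralizer :=
    φ.unitary_mem_centralizer_of_apply_conj U.prop fun x => by
      rw [← hAd, apply_autNPow_of_invariant hinv]
  have hU : φ U = 0 := by
    have hfix : (γ - 1) * φ U = 0 := by
      linear_combination (by simpa [hαU] using hinv U : γ * φ U = φ U)
    exact (mul_eq_zero.mp hfix).resolve_left (sub_ne_zero.mpr hγ)
  exact hφ.apply_ne_zero_of_mem_centralizer U.prop hcentral hU

theorem no_covariant_irreducible_rep_of_obstruction_general
    {A : Type*} [CStarAlgebra A] (α : A ≃⋆ₐ[ℂ] A)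
    (q : ℕ) (U : unitary A)
    (hAd : ∀ x : A, autNPow α q x = (U : A) * x * star (U : A))
    (γ : ℂ) (hγone : γ ≠ 1)
    (hαU : α (U : A) = γ • (U : A)) :
    (¬∃ (Hs : HilbertC) (π : A →⋆ₐ[ℂ] (Hs.carrier →L[ℂ] Hs.carrier))
        (V : Hs.carrier →L[ℂ] Hs.carrier),
        Nontrivial Hs.carrier ∧ V ∈ unitary (Hs.carrier →L[ℂ] Hs.carrier) ∧
        (∀ T : Hs.carrier →L[ℂ] Hs.carrier, (∀ x, T * π x = π x * T) → ∃ c : ℂ, T = c • 1) ∧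
        (∀ x : A, V * π x * star V = π (α x))) ∧
    ¬∃ φ : A →L[ℂ] ℂ, IsPureState φ ∧ ∀ x, φ (α x) = φ x := by
  refine ⟨?_, not_exists_isPureState_invariant hAd hγone hαU⟩
  rintro ⟨Hs, π, V, hH, hV, hirr, hcov⟩
  exact not_covariant_of_commutant_eq_scalars hγone hAd hαU hV hirr hcov

/-- **Connes-type obstruction**: if `α^q = Ad U` and `α(U) = γU` with `γ ≠ 1`, then `α` admits
no covariant irreducible representation, and hence no `α`-invariant pure state. -/
theorem no_covariant_irreducible_rep_of_obstruction
    {A : Type*} [CStarAlgebra A] (α : A ≃⋆ₐ[ℂ] A)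
    (q : ℕ) (hq : 0 < q) (U : unitary A)
    (hAd : ∀ x : A, autNPow α q x = (U : A) * x * star (U : A))
    (γ : ℂ) (hγnorm : ‖γ‖ = 1) (hγone : γ ≠ 1)
    (hαU : α (U : A) = γ • (U : A)) :
    (¬∃ (Hs : HilbertC) (π : A →⋆ₐ[ℂ] (Hs.carrier →L[ℂ] Hs.carrier))
        (V : Hs.carrier →L[ℂ] Hs.carrier),
        Nontrivial Hs.carrier ∧ V ∈ unitary (Hs.carrier →L[ℂ] Hs.carrier) ∧
        (∀ T : Hs.carrier →L[ℂ] Hs.carrier, (∀ x, T * π x = π x * T) → ∃ c : ℂ, T = c • 1) ∧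
        (∀ x : A, V * π x * star V = π (α x))) ∧
    ¬∃ φ : A →L[ℂ] ℂ, IsPureState φ ∧ ∀ x, φ (α x) = φ x :=
  no_covariant_irreducible_rep_of_obstruction_general α q U hAd γ hγone hαU
end

section
/- Let α be an action of a compact group G on a unital C*-algebra 𝔄 and let E : 𝔄 → 𝔄^α, E(x) = ∫_G α_g(x) dg, be the canonical projection onto the fixed point algebra. Then the map ω ↦ ω∘E is an affine homeomorphism from the state space of 𝔄^α (with the weak*-topology) onto the set of α-invariant states of 𝔄 (with the weak*-topology), and under this map the pure states of 𝔄^α correspond exactly to the extremal α-invariant states of 𝔄. -/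
open scoped ComplexOrder
open MeasureTheory

/-- `u` is an extreme point of the convex set `S`. -/
def ExtremeIn {F : Type*} [AddCommGroup F] [Module ℝ F] (S : Set F) (u : F) : Prop :=
  u ∈ S ∧ ∀ v ∈ S, ∀ w ∈ S, ∀ t : ℝ, 0 < t → t < 1 → u = t • v + (1 - t) • w → v = u ∧ w = u

/-- The fixed point algebra `𝔄^α` of an action, as a star subalgebra. -/
def fixedAlg {G : Type*} [Group G] {A : Type*} [CStarAlgebra A]
    (α : G → A ≃⋆ₐ[ℂ] A) : StarSubalgebra ℂ A where
  carrier := {x | ∀ g, α g x = x}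
  mul_mem' {x y} hx hy := fun g => by rw [map_mul, hx g, hy g]
  add_mem' {x y} hx hy := fun g => by rw [map_add, hx g, hy g]
  algebraMap_mem' c := fun g => by
    rw [Algebra.algebraMap_eq_smul_one, _root_.map_smul, map_one]
  star_mem' {x} hx := fun g => by rw [map_star, hx g]

/-!
If `ω` is a state of `𝔄^α`, then `ω ∘ E` is a positive unital functional on `𝔄`, and a positive
functional on a unital C⋆-algebra has norm `‖f 1‖` (Cauchy–Schwarz in its GNS space), so `ω ∘ E`
is a state; it is invariant because Haar measure on a compact group is also right invariant.
Conversely an invariant state `φ` satisfies `φ ∘ E = φ`, since `φ` commutes with the integral.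
So restriction inverts `ω ↦ ω ∘ E`; both maps are affine and continuous for pointwise convergence,
hence extreme points correspond.
-/

open scoped InnerProductSpace

section PositiveFunctional

variable {A : Type*} [CStarAlgebra A]

namespace PositiveLinearMap

variable [PartialOrder A] [StarOrderedRing A]

/-- Cauchy–Schwarz for the GNS inner product `⟪a, b⟫ = f (star a * b)` at `1` and `a`, together
with `‖a • ξ‖ ≤ ‖a‖ * ‖ξ‖` for the left action of `A` on the GNS space. -/
lemma norm_apply_le_norm_apply_one (f : A →ₚ[ℂ] ℂ) (a : A) : ‖f a‖ ≤ ‖f 1‖ * ‖a‖ := by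
  set o := f.toPreGNS 1
  have hinner : f a = ⟪o, f.toPreGNS a⟫_ℂ := by simp [o, preGNS_inner_def]
  have hleft : ‖f.toPreGNS a‖ ≤ ‖a‖ * ‖o‖ := by
    have : f.toPreGNS a = f.leftMulMapPreGNS a o := by simp [o]
    rw [this]
    exact (f.leftMulMapPreGNS a).le_of_opNorm_le
      (LinearMap.mkContinuous_norm_le _ (norm_nonneg a) _) o
  have hone : ‖o‖ ^ 2 = ‖f 1‖ := by
    have := f.preGNS_norm_sq o
    simp only [o, ofPreGNS_toPreGNS, star_one, one_mul] at this
    rw [← this]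
    simp [o]
  calc ‖f a‖ ≤ ‖o‖ * ‖f.toPreGNS a‖ := hinner ▸ norm_inner_le_norm _ _
    _ ≤ ‖o‖ * (‖a‖ * ‖o‖) := by gcongr
    _ = ‖f 1‖ * ‖a‖ := by rw [← hone]; ring

noncomputable def ofNonnegStarMulSelf (L : A →ₗ[ℂ] ℂ) (hL : ∀ x, 0 ≤ L (star x * x)) :
    A →ₚ[ℂ] ℂ :=
  .mk₀ L fun x hx => by
    obtain ⟨s, rfl⟩ := CStarAlgebra.nonneg_iff_eq_star_mul_self.mp hx
    exact hL s

end PositiveLinearMap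

lemma ContinuousLinearMap.norm_eq_norm_apply_one_of_nonneg {φ : A →L[ℂ] ℂ}
    (hφ : ∀ x, 0 ≤ φ (star x * x)) : ‖φ‖ = ‖φ 1‖ := by
  let _ := CStarAlgebra.spectralOrder A
  have := CStarAlgebra.spectralOrderedRing A
  refine le_antisymm (φ.opNorm_le_bound (norm_nonneg _) fun a => ?_) ?_
  · exact (PositiveLinearMap.ofNonnegStarMulSelf φ.toLinearMap hφ).norm_apply_le_norm_apply_one a
  · have : ‖(1 : A)‖ ≤ 1 := by nontriviality A; exact CStarRing.norm_one.le
    simpa using φ.le_opNorm 1 |>.trans (mul_le_of_le_one_right (norm_nonneg φ) this)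

lemma isState_iff {φ : A →L[ℂ] ℂ} (hφ : ∀ x, 0 ≤ φ (star x * x)) : IsState φ ↔ φ 1 = 1 := by
  have h1 : φ 1 = ‖φ 1‖ := Complex.eq_coe_norm_of_nonneg (by simpa using hφ 1)
  rw [IsState, φ.norm_eq_norm_apply_one_of_nonneg hφ, and_iff_right hφ]
  exact ⟨fun h => by rw [h1, h, Complex.ofReal_one], fun h => by simp [h]⟩

lemma IsState.apply_one_s9 {φ : A →L[ℂ] ℂ} (h : IsState φ) : φ 1 = 1 :=
  (isState_iff h.1).1 h

end PositiveFunctional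

lemma StarSubalgebra.exists_eq_star_mul_self_of_nonneg {A : Type*} [CStarAlgebra A]
    [PartialOrder A] [StarOrderedRing A] (S : StarSubalgebra ℂ A) [IsClosed (S : Set A)]
    {a : A} (haS : a ∈ S) (ha : 0 ≤ a) : ∃ c ∈ S, a = star c * c := by
  refine ⟨CFC.sqrt a, ?_, ?_⟩
  · rw [CFC.sqrt_eq_real_sqrt a]
    exact cfcₙ_mem _ haS
  · rw [(CFC.sqrt_nonneg a).isSelfAdjoint.star_eq, CFC.sqrt_mul_sqrt_self a]

section ExtremePoints

variable {F F' : Type*} [AddCommGroup F] [Module ℝ F] [AddCommGroup F'] [Module ℝ F']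
  {S : Set F} {S' : Set F'}

lemma ExtremeIn.of_map {T : F → F'}
    (hT : ∀ v w (t : ℝ), T (t • v + (1 - t) • w) = t • T v + (1 - t) • T w)
    (hmaps : Set.MapsTo T S S') (hinj : Set.InjOn T S) {u : F} (hu : u ∈ S)
    (h : ExtremeIn S' (T u)) : ExtremeIn S u := by
  refine ⟨hu, fun v hv w hw t ht0 ht1 huvw => ?_⟩
  obtain ⟨hvu, hwu⟩ := h.2 (T v) (hmaps hv) (T w) (hmaps hw) t ht0 ht1 (huvw ▸ hT v w t)
  exact ⟨hinj hv hu hvu, hinj hw hu hwu⟩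

lemma extremeIn_iff_of_invOn {T : F → F'} {r : F' → F}
    (hT : ∀ v w (t : ℝ), T (t • v + (1 - t) • w) = t • T v + (1 - t) • T w)
    (hr : ∀ v w (t : ℝ), r (t • v + (1 - t) • w) = t • r v + (1 - t) • r w)
    (hTmaps : Set.MapsTo T S S') (hrmaps : Set.MapsTo r S' S) (hinv : Set.InvOn r T S S')
    {u : F} (hu : u ∈ S) : ExtremeIn S u ↔ ExtremeIn S' (T u) := by
  refine ⟨fun h => ?_, ExtremeIn.of_map hT hTmaps hinv.1.injOn hu⟩
  rw [← hinv.1 hu] at h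
  exact h.of_map hr hrmaps hinv.2.injOn (hTmaps hu)

end ExtremePoints

lemma MeasureTheory.Measure.IsHaarMeasure.isMulRightInvariant_of_isProbabilityMeasure
    {G : Type*} [Group G] [TopologicalSpace G] [IsTopologicalGroup G] [LocallyCompactSpace G]
    [MeasurableSpace G] [BorelSpace G] (μ : Measure G) [μ.IsHaarMeasure]
    [IsProbabilityMeasure μ] : μ.IsMulRightInvariant where
  map_mul_right_eq_self g := by
    have := isProbabilityMeasure_map (μ := μ) (measurable_mul_const g).aemeasurable
    exact Measure.isHaarMeasure_eq_of_isProbabilityMeasure _ μ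

section OrbitAverage

variable {G : Type*} [MeasurableSpace G] (μ : Measure G)
  {A : Type*} [CStarAlgebra A] (α : G → A ≃⋆ₐ[ℂ] A)

lemma integral_orbit_nonneg [PartialOrder A] [StarOrderedRing A] (x : A) :
    0 ≤ ∫ g, α g (star x * x) ∂μ :=
  integral_nonneg fun g => by
    rw [Pi.zero_apply, map_mul, map_star]
    exact star_mul_self_nonneg _

lemma integrable_orbit [TopologicalSpace G] [CompactSpace G] [OpensMeasurableSpace G]
    [IsFiniteMeasure μ] {x : A} (hx : Continuous fun g => α g x) :
    Integrable (fun g => α g x) μ :=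
  hx.integrable_of_hasCompactSupport (.of_compactSpace _)

variable [IsProbabilityMeasure μ]

lemma apply_integral_orbit {x : A} (hx : Integrable (fun g => α g x) μ) {φ : A →L[ℂ] ℂ}
    (hφ : ∀ g x, φ (α g x) = φ x) : φ (∫ g, α g x ∂μ) = φ x := by
  simp [← φ.integral_comp_comm hx, hφ]

variable [Group G]

instance isClosed_fixedAlg : IsClosed (fixedAlg α : Set A) := by
  have : (fixedAlg α : Set A) = ⋂ g, {x | α g x = x} := by ext; simp [fixedAlg]
  rw [this]
  exact isClosed_iInter fun g => isClosed_eq (StarAlgEquiv.isometry (α g)).continuous continuous_id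

lemma integral_orbit_of_mem_fixedAlg {x : A} (hx : x ∈ fixedAlg α) :
    ∫ g, α g x ∂μ = x := by
  simp [show ∀ g, α g x = x from hx]

lemma integral_orbit_apply [TopologicalSpace G] [IsTopologicalGroup G] [LocallyCompactSpace G]
    [BorelSpace G] [μ.IsHaarMeasure] (hαmul : ∀ g h, α (g * h) = (α h).trans (α g))
    (h : G) (x : A) : ∫ g, α g (α h x) ∂μ = ∫ g, α g x ∂μ := by
  have := Measure.IsHaarMeasure.isMulRightInvariant_of_isProbabilityMeasure μ
  simpa [hαmul] using integral_mul_right_eq_self (μ := μ) (fun g => α g x) h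

end OrbitAverage

lemma exists_invariant_state_eq_comp_integral_orbit
    {G : Type*} [Group G] [TopologicalSpace G] [IsTopologicalGroup G] [CompactSpace G]
    [MeasurableSpace G] [BorelSpace G] (μ : Measure G) [μ.IsHaarMeasure] [IsProbabilityMeasure μ]
    {A : Type*} [CStarAlgebra A] {α : G → A ≃⋆ₐ[ℂ] A}
    (hαmul : ∀ g h, α (g * h) = (α h).trans (α g)) (hcont : ∀ x : A, Continuous fun g => α g x)
    (hE : ∀ x, ∫ g, α g x ∂μ ∈ fixedAlg α) {u : fixedAlg α → ℂ}
    (hadd : ∀ x y, u (x + y) = u x + u y) (hsmul : ∀ (c : ℂ) x, u (c • x) = c * u x)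
    (hpos : ∀ x, 0 ≤ u (star x * x)) (hone : u 1 = 1) :
    ∃ φ : A →L[ℂ] ℂ, IsState φ ∧ (∀ g x, φ (α g x) = φ x) ∧
      (fun x => u ⟨∫ g, α g x ∂μ, hE x⟩) = ⇑φ := by
  let _ := CStarAlgebra.spectralOrder A
  have := CStarAlgebra.spectralOrderedRing A
  have hint x := integrable_orbit μ α (hcont x)
  let L : A →ₗ[ℂ] ℂ :=
    { toFun x := u ⟨∫ g, α g x ∂μ, hE x⟩
      map_add' x y := by
        rw [← hadd]
        congr 1
        ext
        simp [integral_add (hint x) (hint y)]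
      map_smul' c x := by
        rw [RingHom.id_apply, smul_eq_mul, ← hsmul]
        congr 1
        ext
        simp [integral_smul] }
  have hL x : 0 ≤ L (star x * x) := by
    obtain ⟨c, hc, hcc⟩ :=
      (fixedAlg α).exists_eq_star_mul_self_of_nonneg (hE _) (integral_orbit_nonneg μ α x)
    have : (⟨_, hE (star x * x)⟩ : fixedAlg α) = star ⟨c, hc⟩ * ⟨c, hc⟩ := Subtype.ext hcc
    change 0 ≤ u _
    exact this ▸ hpos _
  refine ⟨⟨L, map_continuous (PositiveLinearMap.ofNonnegStarMulSelf L hL)⟩,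
    (isState_iff hL).2 ?_, fun g x => ?_, rfl⟩
  · exact (congrArg u (Subtype.ext (integral_orbit_of_mem_fixedAlg μ α (one_mem _)))).trans hone
  · exact congrArg u (Subtype.ext (integral_orbit_apply μ α hαmul g x))

theorem state_space_of_fixed_point_algebra_homeomorphic_invariant_states_general
    {G : Type*} [Group G] [TopologicalSpace G] [IsTopologicalGroup G] [CompactSpace G]
    [MeasurableSpace G] [BorelSpace G]
    (μ : Measure G) [μ.IsHaarMeasure] [IsProbabilityMeasure μ]
    {A : Type*} [CStarAlgebra A]
    (α : G → A ≃⋆ₐ[ℂ] A)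
    (hαmul : ∀ g h, α (g * h) = (α h).trans (α g))
    (hcont : ∀ x : A, Continuous fun g => α g x)
    (E : A → A) (hEdef : ∀ x, E x = ∫ g, α g x ∂μ)
    (hE : ∀ x, E x ∈ fixedAlg α) :
    -- states on the fixed point algebra (positivity plus normalization; such functionals are
    -- automatically bounded, with norm one)
    let SF : Set (↥(fixedAlg α) → ℂ) :=
      {u | (∀ x y, u (x + y) = u x + u y) ∧ (∀ (c : ℂ) x, u (c • x) = c * u x) ∧
        (∀ x, 0 ≤ u (star x * x)) ∧ u 1 = 1}
    -- the `α`-invariant states of `A`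
    let IS : Set (A → ℂ) :=
      {f | ∃ φ : A →L[ℂ] ℂ, IsState φ ∧ (∀ g x, φ (α g x) = φ x) ∧ f = ⇑φ}
    -- the map `ω ↦ ω ∘ E`
    let T : (↥(fixedAlg α) → ℂ) → (A → ℂ) :=
      fun u x => u ⟨E x, hE x⟩
    -- the restriction map, inverse to `T`
    let r : (A → ℂ) → (↥(fixedAlg α) → ℂ) :=
      fun f x => f ↑x
    -- `T` is a bijection from the state space of `𝔄^α` onto the invariant states,
    Set.BijOn T SF IS ∧
    -- with inverse the restriction map,
    Set.InvOn r T SF IS ∧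
    -- both continuous for the (weak*, i.e. pointwise) topologies, so `T` is a homeomorphism,
    Continuous T ∧ Continuous r ∧
    -- `T` is affine,
    (∀ u ∈ SF, ∀ v ∈ SF, ∀ t : ℝ, 0 ≤ t → t ≤ 1 →
      T (t • u + (1 - t) • v) = t • T u + (1 - t) • T v) ∧
    -- and pure states of `𝔄^α` correspond exactly to extremal invariant states of `A`.
    (∀ u ∈ SF, ExtremeIn SF u ↔ ExtremeIn IS (T u)) := by
  intro SF IS T r
  obtain rfl : E = fun x => ∫ g, α g x ∂μ := funext hEdef
  have hT : Set.MapsTo T SF IS := fun u ⟨hadd, hsmul, hpos, hone⟩ =>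
    exists_invariant_state_eq_comp_integral_orbit μ hαmul hcont hE hadd hsmul hpos hone
  have hr : Set.MapsTo r IS SF := by
    rintro _ ⟨φ, hφ, -, rfl⟩
    exact ⟨fun x y => map_add φ (x : A) y, fun c x => map_smul φ c (x : A), fun x => hφ.1 x,
      hφ.apply_one_s9⟩
  have hinv : Set.InvOn r T SF IS := by
    refine ⟨fun u _ => funext fun y => ?_, ?_⟩
    · exact congrArg u (Subtype.ext (integral_orbit_of_mem_fixedAlg μ α y.2))
    · rintro _ ⟨φ, -, hφ, rfl⟩
      exact funext fun x => apply_integral_orbit μ α (integrable_orbit μ α (hcont x)) hφ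
  exact ⟨hinv.bijOn hT hr, hinv, continuous_pi fun x => continuous_apply _,
    continuous_pi fun y => continuous_apply _, fun u _ v _ t _ _ => rfl,
    fun u hu => extremeIn_iff_of_invOn (fun _ _ _ => rfl) (fun _ _ _ => rfl) hT hr hinv hu⟩

/-- **Section 3, introductory remarks**: for an action `α` of a compact group `G` on a unital
C*-algebra `A`, with `E(x) = ∫_G α_g(x) dg` the canonical projection onto the fixed point
algebra, the map `ω ↦ ω ∘ E` is an affine homeomorphism (for the weak*-topologies, i.e. the
topologies of pointwise convergence) from the state space of `𝔄^α` onto the `α`-invariant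
states of `A`, under which pure states correspond exactly to extremal invariant states. -/
theorem state_space_of_fixed_point_algebra_homeomorphic_invariant_states
    {G : Type*} [Group G] [TopologicalSpace G] [IsTopologicalGroup G] [CompactSpace G]
    [T2Space G] [MeasurableSpace G] [BorelSpace G]
    (μ : Measure G) [μ.IsHaarMeasure] [IsProbabilityMeasure μ]
    {A : Type*} [CStarAlgebra A]
    (α : G → A ≃⋆ₐ[ℂ] A)
    (hα1 : α 1 = StarAlgEquiv.refl ℂ A)
    (hαmul : ∀ g h, α (g * h) = (α h).trans (α g))
    (hcont : ∀ x : A, Continuous fun g => α g x)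
    (E : A → A) (hEdef : ∀ x, E x = ∫ g, α g x ∂μ)
    (hE : ∀ x, E x ∈ fixedAlg α) :
    -- states on the fixed point algebra (positivity plus normalization; such functionals are
    -- automatically bounded, with norm one)
    let SF : Set (↥(fixedAlg α) → ℂ) :=
      {u | (∀ x y, u (x + y) = u x + u y) ∧ (∀ (c : ℂ) x, u (c • x) = c * u x) ∧
        (∀ x, 0 ≤ u (star x * x)) ∧ u 1 = 1}
    -- the `α`-invariant states of `A`
    let IS : Set (A → ℂ) :=
      {f | ∃ φ : A →L[ℂ] ℂ, IsState φ ∧ (∀ g x, φ (α g x) = φ x) ∧ f = ⇑φ}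
    -- the map `ω ↦ ω ∘ E`
    let T : (↥(fixedAlg α) → ℂ) → (A → ℂ) :=
      fun u x => u ⟨E x, hE x⟩
    -- the restriction map, inverse to `T`
    let r : (A → ℂ) → (↥(fixedAlg α) → ℂ) :=
      fun f x => f ↑x
    -- `T` is a bijection from the state space of `𝔄^α` onto the invariant states,
    Set.BijOn T SF IS ∧
    -- with inverse the restriction map,
    Set.InvOn r T SF IS ∧
    -- both continuous for the (weak*, i.e. pointwise) topologies, so `T` is a homeomorphism,
    Continuous T ∧ Continuous r ∧
    -- `T` is affine,
    (∀ u ∈ SF, ∀ v ∈ SF, ∀ t : ℝ, 0 ≤ t → t ≤ 1 →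
      T (t • u + (1 - t) • v) = t • T u + (1 - t) • T v) ∧
    -- and pure states of `𝔄^α` correspond exactly to extremal invariant states of `A`.
    (∀ u ∈ SF, ExtremeIn SF u ↔ ExtremeIn IS (T u)) :=
  state_space_of_fixed_point_algebra_homeomorphic_invariant_states_general μ α hαmul hcont E hEdef
    hE
end
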